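/- arXiv:1310.2347 — 3 statements merged into one kernel-verified Lean document; each statement's English description precedes it below -/
import Mathlib

section
/- Suppose there exist h > 0 and ε > 0 such that S_h'(ε) < +∞. Then lim_{t→∞} ∫_t^{t+1} ‖σ(s)‖_F² ds = 0. -/
open MeasureTheory Filter

/-- The squared Frobenius norm of `σ(s)`. -/
noncomputable def F2 {d r : ℕ} (σ : ℝ → Matrix (Fin d) (Fin r) ℝ) (s : ℝ) : ℝ :=
  ∑ i : Fin d, ∑ j : Fin r, (σ s i j) ^ 2

/-- `θ_h(n)² = ∫_{nh}^{(n+1)h} ‖σ(s)‖_F² ds`. -/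
noncomputable def theta2 {d r : ℕ} (σ : ℝ → Matrix (Fin d) (Fin r) ℝ) (h : ℝ) (n : ℕ) : ℝ :=
  ∫ s in ((n : ℝ) * h)..(((n : ℝ) + 1) * h), F2 σ s

/-- The `n`-th summand of `S_h'(ε)`, taken to be `0` when `θ_h(n) = 0`. -/
noncomputable def Sterm {d r : ℕ} (σ : ℝ → Matrix (Fin d) (Fin r) ℝ) (h ε : ℝ) (n : ℕ) : ℝ :=
  if theta2 σ h n = 0 then 0
  else Real.sqrt (theta2 σ h n) * Real.exp (-(ε ^ 2) / (2 * theta2 σ h n))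

/-- `S_h'(ε) = ∑_{n=1}^∞ θ_h(n) exp(-ε²/(2θ_h(n)²)) < +∞`.
Since all summands are nonnegative, finiteness is expressed as summability. -/
def SFinite {d r : ℕ} (σ : ℝ → Matrix (Fin d) (Fin r) ℝ) (h ε : ℝ) : Prop :=
  Summable fun n : ℕ => Sterm σ h ε (n + 1)

section aux
variable {d r : ℕ} (σ : ℝ → Matrix (Fin d) (Fin r) ℝ)

lemma F2_nonneg (s : ℝ) : 0 ≤ F2 σ s :=
  Finset.sum_nonneg fun i _ => Finset.sum_nonneg fun j _ => sq_nonneg _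

lemma F2_contOn (hσ : ContinuousOn σ (Set.Ici 0)) :
    ContinuousOn (F2 σ) (Set.Ici 0) := by
  apply continuousOn_finset_sum
  intro i _
  apply continuousOn_finset_sum
  intro j _
  exact (((continuous_apply j).comp (continuous_apply i)).comp_continuousOn hσ).pow 2

lemma F2_intInt (hσ : ContinuousOn σ (Set.Ici 0)) {a b : ℝ} (ha : 0 ≤ a) (hb : 0 ≤ b) :
    IntervalIntegrable (F2 σ) volume a b :=
  ((F2_contOn σ hσ).mono (Set.ordConnected_Ici.uIcc_subset ha hb)).intervalIntegrable

lemma theta2_nonneg {h : ℝ} (hh : 0 < h) (n : ℕ) : 0 ≤ theta2 σ h n :=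
  intervalIntegral.integral_nonneg (by nlinarith) (fun s _ => F2_nonneg σ s)

end aux


lemma theta2_tendsto {d r : ℕ} (σ : ℝ → Matrix (Fin d) (Fin r) ℝ) {h ε : ℝ}
    (hh : 0 < h) (hε : 0 < ε) (hS : SFinite σ h ε) :
    Tendsto (fun n => theta2 σ h n) atTop (nhds 0) := by
  rw [← tendsto_add_atTop_iff_nat 1]
  have h0 := hS.tendsto_atTop_zero
  rw [Metric.tendsto_atTop] at h0 ⊢
  intro δ hδ
  obtain ⟨N, hN⟩ := h0 (Real.sqrt δ * Real.exp (-(ε^2)/(2*δ))) (by positivity)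
  refine ⟨N, fun n hn => ?_⟩
  have hne := hN n hn
  rw [Real.dist_eq, sub_zero, abs_of_nonneg (theta2_nonneg σ hh _)]
  by_contra hcon
  push_neg at hcon
  set T := theta2 σ h (n+1) with hTdef
  have hT : 0 < T := lt_of_lt_of_le hδ hcon
  have hs : Sterm σ h ε (n+1) = Real.sqrt T * Real.exp (-(ε^2)/(2*T)) := by
    rw [Sterm, if_neg hT.ne']
  have hmono : -(ε^2)/(2*δ) ≤ -(ε^2)/(2*T) := by
    rw [neg_div, neg_div, neg_le_neg_iff]
    gcongr
  have hge : Real.sqrt δ * Real.exp (-(ε^2)/(2*δ)) ≤ Sterm σ h ε (n+1) := by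
    rw [hs]
    exact mul_le_mul (Real.sqrt_le_sqrt hcon) (Real.exp_le_exp.mpr hmono)
      (Real.exp_pos _).le (Real.sqrt_nonneg _)
  rw [Real.dist_eq, sub_zero] at hne
  have := le_abs_self (Sterm σ h ε (n+1))
  linarith
theorem stmt_3 (d r : ℕ) (hd : 1 ≤ d) (hr : 1 ≤ r)
    (σ : ℝ → Matrix (Fin d) (Fin r) ℝ) (hσ : ContinuousOn σ (Set.Ici 0))
    (h ε : ℝ) (hh : 0 < h) (hε : 0 < ε) (hS : SFinite σ h ε) :
    Tendsto (fun t : ℝ => ∫ s in t..(t + 1), F2 σ s) atTop (nhds 0) := by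
  have htend := theta2_tendsto σ hh hε hS
  rw [Metric.tendsto_atTop] at htend ⊢
  intro η hη
  set K : ℕ := ⌈1/h⌉₊ + 2 with hK
  have hKpos : 0 < (K:ℝ) := by positivity
  obtain ⟨N, hN⟩ := htend (η / K) (by positivity)
  refine ⟨(N:ℝ) * h, fun t ht => ?_⟩
  have ht0 : 0 ≤ t := le_trans (by positivity) ht
  set n₀ := ⌊t/h⌋₊ with hn₀
  have hfl : (n₀:ℝ) * h ≤ t := by
    have h1 : ((n₀:ℝ)) ≤ t/h := Nat.floor_le (div_nonneg ht0 hh.le)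
    calc (n₀:ℝ)*h ≤ (t/h)*h := by gcongr
    _ = t := div_mul_cancel₀ t hh.ne'
  have hceil : t + 1 ≤ ((n₀:ℝ) + K) * h := by
    have h1 : t < ((n₀:ℝ)+1)*h := by
      have h2 : t/h < (n₀:ℝ)+1 := Nat.lt_floor_add_one (t/h)
      calc t = (t/h)*h := (div_mul_cancel₀ t hh.ne').symm
      _ < ((n₀:ℝ)+1)*h := by
          exact mul_lt_mul_of_pos_right h2 hh
    have h2 : (1:ℝ) + h ≤ ((K:ℝ)-1)*h := by
      have h3 : (1/h : ℝ) ≤ (⌈1/h⌉₊ : ℝ) := Nat.le_ceil _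
      have hKc : ((K:ℝ)-1) = (⌈1/h⌉₊:ℝ) + 1 := by rw [hK]; push_cast; ring
      rw [hKc]
      have : (1:ℝ) = (1/h)*h := (div_mul_cancel₀ 1 hh.ne').symm
      nlinarith
    nlinarith
  have hn₀N : N ≤ n₀ := Nat.le_floor (by rw [le_div_iff₀ hh]; linarith)
  have key : (∫ s in t..(t+1), F2 σ s) ≤ ∫ s in ((n₀:ℝ)*h)..(((n₀:ℝ)+K)*h), F2 σ s := by
    apply intervalIntegral.integral_mono_interval hfl (by linarith) hceil
      (ae_of_all _ fun s => F2_nonneg σ s)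
      (F2_intInt σ hσ (by positivity) (by nlinarith))
  have hsum : (∫ s in ((n₀:ℝ)*h)..(((n₀:ℝ)+(K:ℝ))*h), F2 σ s)
      = ∑ i ∈ Finset.range K, theta2 σ h (n₀ + i) := by
    have hadj := intervalIntegral.sum_integral_adjacent_intervals
      (a := fun i => ((n₀ + i : ℕ) : ℝ) * h) (n := K) (f := F2 σ) (μ := volume)
      (fun k _ => F2_intInt σ hσ (by positivity) (by positivity))
    have e0 : ((n₀ + 0 : ℕ) : ℝ) * h = (n₀:ℝ)*h := by push_cast; ring
    have eK : ((n₀ + K : ℕ) : ℝ) * h = ((n₀:ℝ)+(K:ℝ))*h := by push_cast; ring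
    simp only [e0, eK] at hadj
    rw [← hadj]
    apply Finset.sum_congr rfl
    intro i _
    rw [theta2]
    congr 1 <;> push_cast <;> ring
  have hlt : ∑ i ∈ Finset.range K, theta2 σ h (n₀+i) < η := by
    have hterm : ∀ i ∈ Finset.range K, theta2 σ h (n₀+i) < η / K := by
      intro i _
      have := hN (n₀+i) (le_trans hn₀N (Nat.le_add_right _ _))
      rwa [Real.dist_eq, sub_zero, abs_of_nonneg (theta2_nonneg σ hh _)] at this
    calc ∑ i ∈ Finset.range K, theta2 σ h (n₀+i)
        < ∑ _i ∈ Finset.range K, η/K :=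
          Finset.sum_lt_sum_of_nonempty (by simp [hK]) hterm
      _ = η := by
          rw [Finset.sum_const, Finset.card_range, nsmul_eq_mul]
          field_simp
  have hnn : 0 ≤ ∫ s in t..(t+1), F2 σ s :=
    intervalIntegral.integral_nonneg (by linarith) (fun s _ => F2_nonneg σ s)
  rw [Real.dist_eq, sub_zero, abs_of_nonneg hnn]
  calc (∫ s in t..(t+1), F2 σ s) ≤ _ := key
    _ = ∑ i ∈ Finset.range K, theta2 σ h (n₀ + i) := hsum
    _ < η := hlt
end

section
/- If liminf_{t→∞} ‖z(t) + Y(t)‖ < +∞, then liminf_{t→∞} ‖z(t)‖ = 0 and limsup_{t→∞} ‖z(t)‖ < +∞. -/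
/-!
Let `V = ‖z‖²`, so `V' = 2⟪z, -f (z + Y) + Y⟫`. On a compact annulus `a ≤ ‖x‖ ≤ b` with `0 < a`
the dissipation `⟪x, f x⟫` is bounded below by some `δ > 0`, and since `Y → 0` the perturbed
quantity `⟪x, -f (x + Y t) + Y t⟫` is eventually `≤ -δ/2` uniformly on the annulus. Hence `V` is
strictly decreasing whenever `‖z‖ = r`, so a sphere that `z` meets late enough traps it: this bounds
the `limsup`, given that `z + Y` (hence `z`) returns infinitely often to a ball. And if `‖z‖` stayed
in some annulus `[e, r]` forever, `V` would decrease at a linear rate and become negative, so the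
`liminf` vanishes.
-/

open Filter Set Topology
open scoped RealInnerProductSpace ENNReal NNReal

section ScalarODE

variable {g g' : ℝ → ℝ}

lemma le_of_hasDerivAt_neg_of_eq {t₀ c : ℝ} (hg : ∀ t ≥ t₀, HasDerivAt g (g' t) t)
    (hg' : ∀ t ≥ t₀, g t = c → g' t < 0) (h₀ : g t₀ ≤ c) {t : ℝ} (ht : t₀ ≤ t) : g t ≤ c :=
  image_le_of_deriv_right_lt_deriv_boundary' (B := fun _ => c) (B' := 0)
    (fun s hs => (hg s hs.1).continuousAt.continuousWithinAt)
    (fun s hs => (hg s hs.1).hasDerivWithinAt) h₀ continuousOn_const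
    (fun _ _ => hasDerivWithinAt_const _ _ _) (fun s hs => hg' s hs.1) ⟨ht, le_rfl⟩

lemma exists_neg_of_hasDerivAt_le_neg {T δ : ℝ} (hδ : 0 < δ)
    (hg : ∀ t ≥ T, HasDerivAt g (g' t) t) (hg' : ∀ t ≥ T, g' t ≤ -δ) : ∃ t ≥ T, g t < 0 := by
  have hdecr : ∀ t ≥ T, g t - g T ≤ -δ * (t - T) := fun t ht =>
    (convex_Ici T).image_sub_le_mul_sub_of_deriv_le
      (fun s hs => (hg s hs).continuousAt.continuousWithinAt)
      (fun s hs => (hg s (interior_subset hs)).differentiableAt.differentiableWithinAt)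
      (fun s hs => (hg s (interior_subset hs)).deriv ▸ hg' s (interior_subset hs))
      T self_mem_Ici t ht ht
  have hstep : 0 ≤ (|g T| + 1) / δ := by positivity
  refine ⟨T + (|g T| + 1) / δ, le_add_of_nonneg_right hstep, ?_⟩
  have := hdecr _ (le_add_of_nonneg_right hstep)
  rw [add_sub_cancel_left, neg_mul, mul_div_cancel₀ _ hδ.ne'] at this
  linarith [le_abs_self (g T)]

end ScalarODE

section ENNRealNorm

variable {ι E : Type*} [SeminormedAddCommGroup E] {l : Filter ι} {u : ι → E}

lemma exists_frequently_norm_le_of_liminf_nnnorm_lt_top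
    (h : liminf (fun i => (‖u i‖₊ : ℝ≥0∞)) l < ⊤) : ∃ r : ℝ≥0, ∃ᶠ i in l, ‖u i‖ ≤ r := by
  obtain ⟨r, hr, -⟩ := ENNReal.lt_iff_exists_nnreal_btwn.1 h
  exact ⟨r, (frequently_lt_of_liminf_lt (by isBoundedDefault) hr).mono fun i hi =>
    (ENNReal.coe_lt_coe.1 hi).le⟩

lemma limsup_nnnorm_lt_top_of_eventually_norm_le {r : ℝ≥0} (h : ∀ᶠ i in l, ‖u i‖ ≤ r) :
    limsup (fun i => (‖u i‖₊ : ℝ≥0∞)) l < ⊤ :=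
  (limsup_le_of_le (by isBoundedDefault) (h.mono fun i hi => ENNReal.coe_le_coe.2 hi)).trans_lt
    ENNReal.coe_lt_top

lemma liminf_nnnorm_eq_zero_of_frequently_norm_lt (h : ∀ e : ℝ, 0 < e → ∃ᶠ i in l, ‖u i‖ < e) :
    liminf (fun i => (‖u i‖₊ : ℝ≥0∞)) l = 0 := by
  by_contra hne
  obtain ⟨e, he, hlt⟩ := ENNReal.lt_iff_exists_nnreal_btwn.1 (pos_iff_ne_zero.2 hne)
  have hfar := eventually_lt_of_lt_liminf hlt (by isBoundedDefault)
  exact h e (by exact_mod_cast he)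
    (hfar.mono fun i hi => not_lt.2 (ENNReal.coe_lt_coe.1 hi).le)

end ENNRealNorm

variable {E : Type*} [NormedAddCommGroup E] [InnerProductSpace ℝ E] [ProperSpace E]
  {f : E → E}

lemma eventually_inner_perturbed_le_neg (hf : Continuous f) (hdiss : ∀ x, x ≠ 0 → 0 < ⟪x, f x⟫)
    {ι : Type*} {l : Filter ι} {Y : ι → E} (hY : Tendsto Y l (𝓝 0)) {a b : ℝ} (ha : 0 < a) :
    ∃ δ > 0, ∀ᶠ i in l, ∀ x, a ≤ ‖x‖ → ‖x‖ ≤ b → ⟪x, -f (x + Y i) + Y i⟫ ≤ -δ := by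
  set A := Metric.closedBall (0 : E) b \ Metric.ball 0 a
  have hA : IsCompact A := (isCompact_closedBall _ _).diff Metric.isOpen_ball
  have hmemA : ∀ x, a ≤ ‖x‖ → ‖x‖ ≤ b → x ∈ A := fun x h₁ h₂ =>
    ⟨mem_closedBall_zero_iff.2 h₂, by simpa using h₁⟩
  obtain ⟨δ, hδ, hmin⟩ := hA.exists_forall_le' (continuous_id.inner hf).continuousOn
    fun x hx => hdiss x (ne_of_mem_of_not_mem (Metric.mem_ball_self ha) hx.2).symm
  have hψ : Continuous fun p : E × E => ⟪p.2, -f (p.2 + p.1) + p.1⟫ := by fun_prop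
  have htube := hA.eventually_forall_of_forall_eventually (x₀ := (0 : E))
    (P := fun y x => ⟪x, -f (x + y) + y⟫ < -(δ / 2)) fun x hx =>
      hψ.continuousAt.eventually_lt continuousAt_const (by
        have : δ ≤ ⟪x, f x⟫ := hmin x hx
        simp only [add_zero, inner_neg_right]
        linarith)
  exact ⟨δ / 2, half_pos hδ, (hY.eventually htube).mono fun i hi x h₁ h₂ =>
    (hi x (hmemA x h₁ h₂)).le⟩

section Trajectory

variable (hf : Continuous f) (hdiss : ∀ x, x ≠ 0 → 0 < ⟪x, f x⟫) {Y z : ℝ → E}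
  (hY : Tendsto Y atTop (𝓝 0)) (hz : ∀ᶠ t in atTop, HasDerivAt z (-f (z t + Y t) + Y t) t)
include hf hdiss hY hz

lemma eventually_norm_le_of_frequently_norm_le {r : ℝ} (hr : 0 < r)
    (hfreq : ∃ᶠ t in atTop, ‖z t‖ ≤ r) : ∀ᶠ t in atTop, ‖z t‖ ≤ r := by
  obtain ⟨δ, hδ, hsphere⟩ := eventually_inner_perturbed_le_neg hf hdiss hY hr (b := r)
  obtain ⟨T, hT⟩ := eventually_atTop.1 (hz.and hsphere)
  obtain ⟨t₀, ht₀, hzt₀⟩ := frequently_atTop.1 hfreq T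
  refine eventually_atTop.2 ⟨t₀, fun t ht => ?_⟩
  have hsq : ‖z t‖ ^ 2 ≤ r ^ 2 :=
    le_of_hasDerivAt_neg_of_eq (fun s hs => (hT s (ht₀.trans hs)).1.norm_sq)
      (fun s hs heq => by
        have hnorm : ‖z s‖ = r := (pow_left_inj₀ (norm_nonneg _) hr.le two_ne_zero).1 heq
        linarith [(hT s (ht₀.trans hs)).2 (z s) hnorm.ge hnorm.le])
      (pow_le_pow_left₀ (norm_nonneg _) hzt₀ 2) ht
  exact (pow_le_pow_iff_left₀ (norm_nonneg _) hr.le two_ne_zero).1 hsq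

lemma frequently_norm_lt_of_eventually_norm_le {b e : ℝ} (he : 0 < e)
    (hbdd : ∀ᶠ t in atTop, ‖z t‖ ≤ b) : ∃ᶠ t in atTop, ‖z t‖ < e := by
  by_contra! hfar
  obtain ⟨δ, hδ, hannulus⟩ := eventually_inner_perturbed_le_neg hf hdiss hY he (b := b)
  obtain ⟨T, hT⟩ := eventually_atTop.1 (hz.and (hfar.and (hbdd.and hannulus)))
  obtain ⟨t, -, hneg⟩ := exists_neg_of_hasDerivAt_le_neg (mul_pos two_pos hδ)
    (fun s hs => (hT s hs).1.norm_sq) fun s hs => by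
      obtain ⟨-, hlow, hup, hdecr⟩ := hT s hs
      linarith [hdecr (z s) hlow hup]
  exact (sq_nonneg ‖z t‖).not_gt hneg

end Trajectory

theorem stmt_7_general (d : ℕ)
    (f : EuclideanSpace ℝ (Fin d) → EuclideanSpace ℝ (Fin d)) (hf : Continuous f)
    (hdiss : ∀ x : EuclideanSpace ℝ (Fin d), x ≠ 0 → 0 < (inner ℝ x (f x) : ℝ))
    (Y z : ℝ → EuclideanSpace ℝ (Fin d))
    (hYlim : Tendsto Y atTop (nhds 0))
    (hz : ∀ t : ℝ, 0 ≤ t → HasDerivAt z (-f (z t + Y t) + Y t) t)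
    (hliminf : liminf (fun t : ℝ => (‖z t + Y t‖₊ : ENNReal)) atTop < ⊤) :
    liminf (fun t : ℝ => (‖z t‖₊ : ENNReal)) atTop = 0 ∧
    limsup (fun t : ℝ => (‖z t‖₊ : ENNReal)) atTop < ⊤ := by
  have hz' := eventually_atTop.2 ⟨0, hz⟩
  obtain ⟨r, hr⟩ := exists_frequently_norm_le_of_liminf_nnnorm_lt_top hliminf
  have hfreq : ∃ᶠ t in atTop, ‖z t‖ ≤ r + 1 :=
    (hr.and_eventually (hYlim.eventually (Metric.closedBall_mem_nhds 0 one_pos))).mono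
      fun t ⟨hzY, hY⟩ => by
        have := norm_sub_le (z t + Y t) (Y t)
        rw [add_sub_cancel_right] at this
        linarith [mem_closedBall_zero_iff.1 hY]
  have hbdd := eventually_norm_le_of_frequently_norm_le hf hdiss hYlim hz' (by positivity) hfreq
  exact ⟨liminf_nnnorm_eq_zero_of_frequently_norm_lt fun e he =>
      frequently_norm_lt_of_eventually_norm_le hf hdiss hYlim hz' he hbdd,
    limsup_nnnorm_lt_top_of_eventually_norm_le (r := r + 1) (by exact_mod_cast hbdd)⟩

theorem stmt_7 (d : ℕ) (hd : 1 ≤ d)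
    (f : EuclideanSpace ℝ (Fin d) → EuclideanSpace ℝ (Fin d)) (hf : Continuous f)
    (hf0 : f 0 = 0)
    (hdiss : ∀ x : EuclideanSpace ℝ (Fin d), x ≠ 0 → 0 < (inner ℝ x (f x) : ℝ))
    (Y z : ℝ → EuclideanSpace ℝ (Fin d))
    (hY : ContinuousOn Y (Set.Ici 0)) (hYlim : Tendsto Y atTop (nhds 0))
    (hz : ∀ t : ℝ, 0 ≤ t → HasDerivAt z (-f (z t + Y t) + Y t) t)
    (hliminf : liminf (fun t : ℝ => (‖z t + Y t‖₊ : ENNReal)) atTop < ⊤) :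
    liminf (fun t : ℝ => (‖z t‖₊ : ENNReal)) atTop = 0 ∧
    limsup (fun t : ℝ => (‖z t‖₊ : ENNReal)) atTop < ⊤ :=
  stmt_7_general d f hf hdiss Y z hYlim hz hliminf
end

section
/- Suppose liminf_{t→∞} ‖σ(t)‖_F² · log t > 0. Then for every h > 0 there exists ε₁ > 0 such that S_h'(ε) = +∞ for all ε with 0 < ε < ε₁. -/
open MeasureTheory Filter

lemma F2_continuousOn {d r : ℕ} (σ : ℝ → Matrix (Fin d) (Fin r) ℝ)
    (hσ : ContinuousOn σ (Set.Ici 0)) : ContinuousOn (F2 σ) (Set.Ici 0) := by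
  unfold F2
  apply continuousOn_finset_sum
  intro i _
  apply continuousOn_finset_sum
  intro j _
  exact (((continuous_apply j).comp (continuous_apply i)).comp_continuousOn hσ).pow 2

lemma not_summable_g (C h : ℝ) (hC : 0 < C) (hh : 0 < h) :
    ¬ Summable (fun m : ℕ => C * (((m : ℝ) + 1) * h) ^ (-(5/16) : ℝ)) := by
  intro hs
  have key : ∀ m : ℕ, C * (((m : ℝ) + 1) * h) ^ (-(5/16) : ℝ)
      = (C * h ^ (-(5/16) : ℝ)) * ((m : ℝ) + 1) ^ (-(5/16) : ℝ) := by
    intro m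
    rw [Real.mul_rpow (by positivity) hh.le]
    ring
  rw [funext key] at hs
  have hC' : (C * h ^ (-(5/16) : ℝ)) ≠ 0 := by positivity
  have hs2 : Summable (fun m : ℕ => ((m : ℝ) + 1) ^ (-(5/16) : ℝ)) :=
    (summable_mul_left_iff hC').mp hs
  have hs3 : Summable (fun m : ℕ => ((m + 1 : ℕ) : ℝ) ^ (-(5/16) : ℝ)) := by
    simpa using hs2
  have hs4 : Summable (fun n : ℕ => (n : ℝ) ^ (-(5/16) : ℝ)) :=
    (summable_nat_add_iff 1).mp hs3
  have := Real.summable_nat_rpow.mp hs4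
  norm_num at this

lemma Sterm_nonneg {d r : ℕ} (σ : ℝ → Matrix (Fin d) (Fin r) ℝ) (h ε : ℝ) (n : ℕ) :
    0 ≤ Sterm σ h ε n := by
  unfold Sterm
  split
  · exact le_rfl
  · positivity

set_option maxHeartbeats 1600000 in
theorem stmt_14 (d r : ℕ) (hd : 1 ≤ d) (hr : 1 ≤ r)
    (σ : ℝ → Matrix (Fin d) (Fin r) ℝ) (hσ : ContinuousOn σ (Set.Ici 0))
    (hliminf : ∃ c : ℝ, 0 < c ∧ ∀ᶠ t : ℝ in atTop, c ≤ F2 σ t * Real.log t) :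
    ∀ h : ℝ, 0 < h → ∃ ε₁ : ℝ, 0 < ε₁ ∧
      ∀ ε : ℝ, 0 < ε → ε < ε₁ → ¬ SFinite σ h ε := by
  obtain ⟨c, hc, hev⟩ := hliminf
  rw [Filter.eventually_atTop] at hev
  obtain ⟨T, hT⟩ := hev
  intro h hh
  refine ⟨Real.sqrt (c * h / 2), Real.sqrt_pos.mpr (by positivity), ?_⟩
  intro ε hε hε1 hS
  -- ε² < c h / 2
  have hε2 : ε ^ 2 < c * h / 2 := by
    have := Real.sq_sqrt (show (0:ℝ) ≤ c * h / 2 by positivity)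
    nlinarith [hε.le, hε1]
  set N : ℕ := ⌈max T 3 / h⌉₊ with hNdef
  have hNh : max T 3 ≤ (N : ℝ) * h := by
    have h1 : max T 3 / h ≤ (N : ℝ) := Nat.le_ceil _
    calc max T 3 = max T 3 / h * h := by field_simp
      _ ≤ (N : ℝ) * h := by gcongr
  -- key pointwise bound
  have key : ∀ m : ℕ, N ≤ m →
      Real.sqrt (c * h / 8) * (((m : ℝ) + 1) * h) ^ (-(5/16) : ℝ) ≤ Sterm σ h ε m := by
    intro m hm
    set x : ℝ := ((m : ℝ) + 1) * h with hxdef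
    have hmh : max T 3 ≤ (m : ℝ) * h := by
      refine le_trans hNh ?_
      have : (N : ℝ) ≤ (m : ℝ) := Nat.cast_le.mpr hm
      gcongr
    have hmh3 : (3:ℝ) ≤ (m : ℝ) * h := le_trans (le_max_right T 3) hmh
    have hmhx : (m : ℝ) * h ≤ x := by
      rw [hxdef]; nlinarith
    have hx0 : 0 < x := by nlinarith
    have hx1 : (1:ℝ) ≤ x := by nlinarith
    set L : ℝ := Real.log x with hLdef
    have hL1 : 1 ≤ L := by
      rw [hLdef, Real.le_log_iff_exp_le hx0]
      calc Real.exp 1 ≤ 2.7182818286 := Real.exp_one_lt_d9.le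
        _ ≤ x := by nlinarith
    have hL0 : 0 < L := by linarith
    set a : ℝ := c * h / L with hadef
    have ha : 0 < a := by positivity
    -- integral lower bound : a ≤ theta2 σ h m
    have hθa : a ≤ theta2 σ h m := by
      have hint : IntervalIntegrable (F2 σ) volume ((m : ℝ) * h) (((m : ℝ) + 1) * h) := by
        apply ContinuousOn.intervalIntegrable
        apply (F2_continuousOn σ hσ).mono
        rw [Set.uIcc_of_le (by nlinarith)]
        intro s hs
        have : (0:ℝ) ≤ (m : ℝ) * h := by positivity
        exact le_trans this hs.1
      have hmono : ∀ s ∈ Set.Icc ((m : ℝ) * h) (((m : ℝ) + 1) * h), c / L ≤ F2 σ s := by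
        intro s hs
        have hs3 : (3:ℝ) ≤ s := le_trans hmh3 hs.1
        have hsT : T ≤ s := le_trans (le_trans (le_max_left T 3) hmh) hs.1
        have hlogs : 1 ≤ Real.log s := by
          rw [Real.le_log_iff_exp_le (by linarith)]
          calc Real.exp 1 ≤ 2.7182818286 := Real.exp_one_lt_d9.le
            _ ≤ s := by linarith
        have h1 : c ≤ F2 σ s * Real.log s := hT s hsT
        have h2 : Real.log s ≤ L := by
          rw [hLdef]
          exact Real.log_le_log (by linarith) (le_trans hs.2 (le_of_eq hxdef.symm))
        calc c / L ≤ c / Real.log s := by gcongr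
          _ ≤ F2 σ s := (div_le_iff₀ (by linarith)).mpr h1
      have := intervalIntegral.integral_mono_on (by nlinarith)
        (intervalIntegrable_const (c := c / L)) hint hmono
      rw [intervalIntegral.integral_const] at this
      have heq : (((m : ℝ) + 1) * h - (m : ℝ) * h) • (c / L) = a := by
        rw [smul_eq_mul, hadef]; field_simp; ring
      rw [heq] at this
      exact this.trans_eq rfl
    have hθ0 : 0 < theta2 σ h m := lt_of_lt_of_le ha hθa
    unfold Sterm
    rw [if_neg hθ0.ne']
    -- bound exp factor
    have hexp : Real.exp (-(ε ^ 2) / (2 * a)) ≤ Real.exp (-(ε ^ 2) / (2 * theta2 σ h m)) := by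
      apply Real.exp_le_exp.mpr
      rw [neg_div, neg_div]
      apply neg_le_neg
      gcongr
    have hsq : Real.sqrt a ≤ Real.sqrt (theta2 σ h m) := Real.sqrt_le_sqrt hθa
    have step1 : Real.sqrt a * Real.exp (-(ε ^ 2) / (2 * a)) ≤
        Real.sqrt (theta2 σ h m) * Real.exp (-(ε ^ 2) / (2 * theta2 σ h m)) := by
      apply mul_le_mul hsq hexp (Real.exp_nonneg _) (Real.sqrt_nonneg _)
    refine le_trans ?_ step1
    -- exp equals rpow
    set β : ℝ := ε ^ 2 / (2 * (c * h)) with hβdef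
    have hβ : β < 1/4 := by
      rw [hβdef, div_lt_iff₀ (by positivity)]
      nlinarith
    have hβ0 : 0 ≤ β := by positivity
    have hexpeq : Real.exp (-(ε ^ 2) / (2 * a)) = x ^ (-β) := by
      rw [Real.rpow_def_of_pos hx0]
      congr 1
      rw [hadef, hβdef, hLdef]
      field_simp
    rw [hexpeq]
    have hxpow : x ^ (-(1/4) : ℝ) ≤ x ^ (-β) :=
      Real.rpow_le_rpow_of_exponent_le hx1 (by linarith)
    -- sqrt a lower bound
    have hLle : L ≤ 8 * x ^ ((1/8) : ℝ) := by
      have h8 : Real.log (x ^ ((1/8) : ℝ)) = (1/8) * L := Real.log_rpow hx0 _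
      have h9 := Real.log_le_sub_one_of_pos (show (0:ℝ) < x ^ ((1/8) : ℝ) by positivity)
      linarith
    have hstep : Real.sqrt (c * h / 8) * x ^ (-(1/16) : ℝ) ≤ Real.sqrt a := by
      have h1 : (c * h / 8) * x ^ (-(1/8) : ℝ) ≤ a := by
        have he : (c * h / 8) * x ^ (-(1/8) : ℝ) = c * h / (8 * x ^ ((1/8) : ℝ)) := by
          rw [Real.rpow_neg hx0.le, div_mul_eq_div_div, div_eq_mul_inv]
          ring
        rw [he, hadef]
        gcongr
      have h2 : Real.sqrt (c * h / 8) * x ^ (-(1/16) : ℝ)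
          = Real.sqrt ((c * h / 8) * x ^ (-(1/8) : ℝ)) := by
        rw [Real.sqrt_mul (by positivity)]
        congr 1
        rw [Real.sqrt_eq_rpow, ← Real.rpow_mul hx0.le]
        norm_num
      rw [h2]
      exact Real.sqrt_le_sqrt h1
    calc Real.sqrt (c * h / 8) * x ^ (-(5/16) : ℝ)
        = (Real.sqrt (c * h / 8) * x ^ (-(1/16) : ℝ)) * x ^ (-(1/4) : ℝ) := by
          rw [mul_assoc, ← Real.rpow_add hx0]; norm_num
      _ ≤ Real.sqrt a * x ^ (-β) := by
          apply mul_le_mul hstep hxpow (by positivity) (Real.sqrt_nonneg _)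
  -- summability contradiction
  unfold _root_.SFinite at hS
  have hS2 : Summable (fun n : ℕ => Sterm σ h ε (n + N + 1)) :=
    (summable_nat_add_iff (f := fun n => Sterm σ h ε (n + 1)) N).mpr hS
  set g : ℕ → ℝ := fun m => Real.sqrt (c * h / 8) * (((m : ℝ) + 1) * h) ^ (-(5/16) : ℝ) with hgdef
  have hg : Summable (fun n : ℕ => g (n + N + 1)) := by
    apply Summable.of_nonneg_of_le ?_ ?_ hS2
    · intro n; rw [hgdef]; positivity
    · intro n
      exact key (n + N + 1) (by omega)
  have hg2 : Summable g := by
    have heq : (fun n : ℕ => g (n + N + 1)) = (fun n : ℕ => g (n + (N + 1))) := by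
      funext n; rw [add_assoc]
    rw [heq] at hg
    exact (summable_nat_add_iff (f := g) (N + 1)).mp hg
  exact not_summable_g _ h (Real.sqrt_pos.mpr (by positivity)) hh hg2
end
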